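/- For every element A of a complex Banach algebra and every natural number l, φ_{l+2}(A) = (1/l!) ∫_0^1 (1−τ) τ^l · φ_1((1−τ)^2 A) dτ, where the integral is the Bochner integral of the continuous algebra-valued integrand. -/

import Mathlib

open MeasureTheory

/-- The oscillatory function `φ_l(A) = ∑_{k=0}^∞ (-1)^k A^k / (2k+l)!` on a
complex Banach algebra. -/
noncomputable def osc {𝔸 : Type*} [NormedRing 𝔸] [NormedAlgebra ℂ 𝔸] [CompleteSpace 𝔸]
    (l : ℕ) (A : 𝔸) : 𝔸 :=
  ∑' k : ℕ, ((-1 : ℂ) ^ k / (Nat.factorial (2 * k + l) : ℂ)) • A ^ k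

lemma beta_nat (n : ℕ) : ∀ m : ℕ, ∫ τ in (0:ℝ)..1, τ ^ m * (1 - τ) ^ n
    = (Nat.factorial m * Nat.factorial n : ℝ) / Nat.factorial (m + n + 1) := by
  induction n with
  | zero =>
    intro m
    have h : (Nat.factorial m : ℝ) ≠ 0 := by positivity
    simp [integral_pow, Nat.factorial_succ]
    field_simp
  | succ n ih =>
    intro m
    have hu : ∀ x ∈ Set.uIcc (0:ℝ) 1, HasDerivAt (fun τ : ℝ => (1-τ)^(n+1))
        (-((n+1) * (1-x)^n)) x := by
      intro x _
      have h1 : HasDerivAt (fun τ : ℝ => 1 - τ) (-1) x := (hasDerivAt_id x).const_sub 1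
      have := h1.fun_pow (n+1)
      simpa [mul_comm] using this
    have hv : ∀ x ∈ Set.uIcc (0:ℝ) 1, HasDerivAt (fun τ : ℝ => τ^(m+1)/(m+1))
        (x^m) x := by
      intro x _
      have := (hasDerivAt_pow (m+1) x).div_const (m+1)
      refine this.congr_deriv ?_
      field_simp
      push_cast
      simp
    have ibp := intervalIntegral.integral_mul_deriv_eq_deriv_mul hu hv
      (by apply Continuous.intervalIntegrable; continuity)
      (by apply Continuous.intervalIntegrable; continuity)
    have key : ∫ x in (0:ℝ)..1, (1-x)^(n+1) * x^m
        = ((n:ℝ)+1)/((m:ℝ)+1) * ∫ x in (0:ℝ)..1, x^(m+1) * (1-x)^n := by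
      rw [ibp]
      have heq : ∀ x : ℝ, -((↑n+1) * (1-x)^n) * (x^(m+1)/(↑m+1))
          = -(((n:ℝ)+1)/((m:ℝ)+1) * (x^(m+1)*(1-x)^n)) := by
        intro x
        have hm : ((m:ℝ)+1) ≠ 0 := by positivity
        field_simp
        try exact Or.inl trivial
      simp_rw [heq, intervalIntegral.integral_neg, intervalIntegral.integral_const_mul]
      simp [zero_pow (Nat.succ_ne_zero m)]
    have := ih (m+1)
    rw [show (∫ τ in (0:ℝ)..1, τ ^ m * (1 - τ) ^ (n+1))
        = ∫ x in (0:ℝ)..1, (1-x)^(n+1) * x^m by congr 1; funext x; ring]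
    rw [key, this]
    rw [div_mul_div_comm]
    rw [div_eq_div_iff (by positivity) (by positivity)]
    push_cast [show m + (n+1) + 1 = (m + n + 1) + 1 by ring, show m + 1 + n + 1 = (m+n+1)+1 by ring,
      Nat.factorial_succ]
    ring

section aux
variable {𝔸 : Type*} [NormedRing 𝔸] [NormedAlgebra ℂ 𝔸] [CompleteSpace 𝔸]

lemma norm_pow_le_aux (A : 𝔸) (k : ℕ) : ‖A ^ k‖ ≤ max ‖(1:𝔸)‖ 1 * ‖A‖ ^ k := by
  cases k with
  | zero => simpa using le_max_left ‖(1:𝔸)‖ 1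
  | succ k =>
    calc ‖A ^ (k+1)‖ ≤ ‖A‖ ^ (k+1) := norm_pow_le' A k.succ_pos
    _ ≤ max ‖(1:𝔸)‖ 1 * ‖A‖ ^ (k+1) :=
      le_mul_of_one_le_left (by positivity) (le_max_right _ _)

lemma osc_term_norm_le (A : 𝔸) (k n : ℕ) (hn : k ≤ n) :
    ‖((-1:ℂ) ^ k / (Nat.factorial n : ℂ)) • A ^ k‖
      ≤ max ‖(1:𝔸)‖ 1 * (‖A‖ ^ k / Nat.factorial k) := by
  rw [norm_smul]
  have h1 : ‖(-1:ℂ) ^ k / (Nat.factorial n : ℂ)‖ = ((Nat.factorial n : ℝ))⁻¹ := by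
    simp [norm_div]
  rw [h1]
  have h2 : ((Nat.factorial n : ℝ))⁻¹ ≤ ((Nat.factorial k : ℝ))⁻¹ := by
    apply inv_anti₀ (by positivity)
    exact_mod_cast Nat.factorial_le hn
  calc ((Nat.factorial n : ℝ))⁻¹ * ‖A ^ k‖
      ≤ ((Nat.factorial k : ℝ))⁻¹ * (max ‖(1:𝔸)‖ 1 * ‖A‖ ^ k) :=
        mul_le_mul h2 (norm_pow_le_aux A k) (norm_nonneg _) (by positivity)
    _ = max ‖(1:𝔸)‖ 1 * (‖A‖ ^ k / Nat.factorial k) := by ring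

lemma osc_summable_norm (l : ℕ) (A : 𝔸) :
    Summable (fun k => ‖((-1:ℂ) ^ k / (Nat.factorial (2 * k + l) : ℂ)) • A ^ k‖) :=
  Summable.of_nonneg_of_le (fun _ => norm_nonneg _)
    (fun k => osc_term_norm_le A k _ (by omega))
    ((Real.summable_pow_div_factorial ‖A‖).mul_left _)

lemma osc_summable (l : ℕ) (A : 𝔸) :
    Summable (fun k => ((-1:ℂ) ^ k / (Nat.factorial (2 * k + l) : ℂ)) • A ^ k) :=
  (osc_summable_norm l A).of_norm

end aux

/-- `φ_{l+2}(A) = (1/l!) ∫_0^1 (1-τ) τ^l φ_1((1-τ)^2 A) dτ`. -/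
theorem osc_integral_formula_one {𝔸 : Type*} [NormedRing 𝔸] [NormedAlgebra ℂ 𝔸]
    [CompleteSpace 𝔸] (l : ℕ) (A : 𝔸) :
    osc (l + 2) A =
      ((Nat.factorial l : ℝ))⁻¹ •
        ∫ τ in (0 : ℝ)..1, ((1 - τ) * τ ^ l) • osc 1 ((((1 - τ : ℝ) : ℂ) ^ 2) • A) := by
  set c : ℕ → ℂ := fun k => (-1:ℂ) ^ k / (Nat.factorial (2 * k + 1) : ℂ) with hc
  -- pointwise expansion of the integrand
  have hint : ∀ τ : ℝ, ((1 - τ) * τ ^ l) • osc 1 ((((1 - τ : ℝ) : ℂ) ^ 2) • A)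
      = ∑' k : ℕ, ((1-τ)^(2*k+1) * τ^l : ℝ) • (c k • A ^ k) := by
    intro τ
    rw [osc, ← Summable.tsum_const_smul _ (osc_summable 1 _)]
    refine tsum_congr fun k => ?_
    have hBk : ((((1 - τ : ℝ) : ℂ)) ^ 2 • A) ^ k = (((1-τ)^(2*k) : ℝ)) • A ^ k := by
      rw [smul_pow, ← pow_mul,
        show (((1 - τ:ℝ):ℂ)) ^ (2*k) = (((1-τ)^(2*k) : ℝ) : ℂ) by push_cast; ring,
        Complex.coe_smul]
    rw [hBk]
    rw [smul_comm ((1 - τ) * τ ^ l) (c k), smul_comm ((1-τ)^(2*k+1) * τ^l) (c k),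
      smul_smul]
    congr 1
    ring
  have hcont : ∀ k : ℕ, Continuous (fun τ : ℝ => ((1-τ)^(2*k+1) * τ^l : ℝ) • (c k • A ^ k)) := by
    intro k; fun_prop
  have hInt : ∀ k : ℕ, IntegrableOn (fun τ : ℝ => ((1-τ)^(2*k+1) * τ^l : ℝ) • (c k • A ^ k))
      (Set.Ioc (0:ℝ) 1) := fun k => (hcont k).integrableOn_Ioc
  -- summability of the integral norms
  have hsum : Summable fun k : ℕ =>
      ∫ τ in Set.Ioc (0:ℝ) 1, ‖((1-τ)^(2*k+1) * τ^l : ℝ) • (c k • A ^ k)‖ := by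
    apply Summable.of_nonneg_of_le
      (fun k => integral_nonneg fun τ => norm_nonneg _)
      (fun k => ?_) (osc_summable_norm 1 A)
    have hb : ∀ τ ∈ Set.Ioc (0:ℝ) 1,
        ‖((1-τ)^(2*k+1) * τ^l : ℝ) • (c k • A ^ k)‖ ≤ ‖c k • A ^ k‖ := by
      intro τ hτ
      rw [norm_smul, Real.norm_eq_abs]
      apply mul_le_of_le_one_left (norm_nonneg _)
      rw [abs_mul, abs_pow, abs_pow]
      have h1 : |1 - τ| ≤ 1 := abs_le.mpr ⟨by linarith [hτ.1, hτ.2], by linarith [hτ.1]⟩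
      have h2 : |τ| ≤ 1 := abs_le.mpr ⟨by linarith [hτ.1.le], hτ.2⟩
      exact mul_le_one₀ (pow_le_one₀ (abs_nonneg _) h1) (by positivity)
        (pow_le_one₀ (abs_nonneg _) h2)
    calc ∫ τ in Set.Ioc (0:ℝ) 1, ‖((1-τ)^(2*k+1) * τ^l : ℝ) • (c k • A ^ k)‖
        ≤ ∫ _τ in Set.Ioc (0:ℝ) 1, ‖c k • A ^ k‖ :=
          setIntegral_mono_on ((hcont k).norm.integrableOn_Ioc)
            ((integrableOn_const_iff).mpr (Or.inr (by simp))) measurableSet_Ioc hb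
      _ = ‖c k • A ^ k‖ := by simp [Real.volume_Ioc]
  -- value of each integral
  have h2 : ∀ k : ℕ, (∫ τ in Set.Ioc (0:ℝ) 1, ((1-τ)^(2*k+1) * τ^l : ℝ) • (c k • A ^ k))
      = ((Nat.factorial l * Nat.factorial (2*k+1) : ℝ)
          / Nat.factorial (l + (2*k+1) + 1)) • (c k • A ^ k) := by
    intro k
    rw [integral_smul_const]
    congr 1
    rw [← intervalIntegral.integral_of_le zero_le_one, ← beta_nat (2*k+1) l]
    exact intervalIntegral.integral_congr fun x _ => by ring
  -- assemble
  rw [intervalIntegral.integral_of_le zero_le_one]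
  have hswap : (∫ τ in Set.Ioc (0:ℝ) 1, ((1 - τ) * τ ^ l) • osc 1 ((((1 - τ : ℝ) : ℂ) ^ 2) • A))
      = ∑' k : ℕ, ∫ τ in Set.Ioc (0:ℝ) 1, ((1-τ)^(2*k+1) * τ^l : ℝ) • (c k • A ^ k) := by
    simp_rw [hint]
    exact (integral_tsum_of_summable_integral_norm hInt hsum).symm
  rw [hswap]
  have h3 : (fun k : ℕ => (∫ τ in Set.Ioc (0:ℝ) 1, ((1-τ)^(2*k+1) * τ^l : ℝ) • (c k • A ^ k)))
      = fun k : ℕ => (Nat.factorial l : ℝ) •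
        (((-1:ℂ) ^ k / (Nat.factorial (2 * k + (l + 2)) : ℂ)) • A ^ k) := by
    funext k
    rw [h2 k]
    have e : l + (2*k+1) + 1 = 2*k + (l + 2) := by omega
    rw [e, ← Complex.coe_smul, ← Complex.coe_smul, smul_smul, smul_smul, hc]
    congr 1
    have f1 : ((Nat.factorial (2*k+1) : ℂ)) ≠ 0 :=
      Nat.cast_ne_zero.mpr (Nat.factorial_ne_zero _)
    have f2 : ((Nat.factorial (2*k+(l+2)) : ℂ)) ≠ 0 :=
      Nat.cast_ne_zero.mpr (Nat.factorial_ne_zero _)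
    push_cast
    field_simp
  rw [h3, Summable.tsum_const_smul _ (osc_summable (l+2) A), smul_smul,
    inv_mul_cancel₀ (by positivity : (Nat.factorial l : ℝ) ≠ 0), one_smul, osc]
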